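/- No approximation ratio better than 2 is achievable by a trade price depending only on the seller's distribution: for every γ < 2 there exists a probability distribution for the seller's value v_s (an equal mixture of the uniform distributions on (0,ε) and on (1,1+ε) for sufficiently small ε > 0) such that for every trade price p ∈ ℝ there exists a constant c ≥ 0 so that, taking the buyer's value to be deterministically v_b = c, γ·E[W_p] ≤ E[max(v_s, c)]. -/

import Mathlib

open MeasureTheory ProbabilityTheory
open scoped ENNReal

/-- The uniform probability distribution on the open interval `(a, b)`. -/
noncomputable def unifIoo (a b : ℝ) : Measure ℝ :=
  (ENNReal.ofReal (b - a))⁻¹ • (volume.restrict (Set.Ioo a b))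

/-- The seller's distribution: an equal mixture of the uniform distributions on
`(0, ε)` and on `(1, 1 + ε)`. -/
noncomputable def sellerMix (ε : ℝ) : Measure ℝ :=
  (1 / 2 : ℝ≥0∞) • unifIoo 0 ε + (1 / 2 : ℝ≥0∞) • unifIoo 1 (1 + ε)

/-!
The seller's value is close to `0` or close to `1`, each with probability `1/2`. A price
`p ≤ 1` never trades with the high seller, so against a buyer of very large value `c` the
welfare is about `c/2` while the optimum is `c`. A price `p > 1` never trades with a buyer of
value `1`, so the welfare is `E[v_s] ≈ 1/2` while the optimum is at least `1`.
-/

open Set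

section unifIoo

variable {a b : ℝ}

lemma isProbabilityMeasure_unifIoo (hab : a < b) : IsProbabilityMeasure (unifIoo a b) := by
  constructor
  rw [unifIoo, Measure.smul_apply, Measure.restrict_apply MeasurableSet.univ, univ_inter,
    Real.volume_Ioo, smul_eq_mul]
  exact ENNReal.inv_mul_cancel (by simpa using hab) ENNReal.ofReal_ne_top

lemma ae_mem_unifIoo : ∀ᵐ x ∂unifIoo a b, x ∈ Ioo a b :=
  Measure.ae_smul_measure (ae_restrict_mem measurableSet_Ioo) _

lemma Continuous.integrable_unifIoo (hab : a < b) {f : ℝ → ℝ} (hf : Continuous f) :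
    Integrable f (unifIoo a b) :=
  (hf.integrableOn_Icc.mono_set Ioo_subset_Icc_self).smul_measure (by simpa using hab)

variable {f : ℝ → ℝ} {M : ℝ}

lemma integral_unifIoo_le (hab : a < b) (hf : Integrable f (unifIoo a b))
    (h : ∀ x ∈ Ioo a b, f x ≤ M) : ∫ x, f x ∂unifIoo a b ≤ M := by
  have := isProbabilityMeasure_unifIoo hab
  calc ∫ x, f x ∂unifIoo a b ≤ ∫ _, M ∂unifIoo a b :=
        integral_mono_ae hf (integrable_const M) (ae_mem_unifIoo.mono h)
    _ = M := by simp

lemma le_integral_unifIoo (hab : a < b) (hf : Integrable f (unifIoo a b))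
    (h : ∀ x ∈ Ioo a b, M ≤ f x) : M ≤ ∫ x, f x ∂unifIoo a b := by
  have := isProbabilityMeasure_unifIoo hab
  calc M = ∫ _, M ∂unifIoo a b := by simp
    _ ≤ ∫ x, f x ∂unifIoo a b :=
        integral_mono_ae (integrable_const M) hf (ae_mem_unifIoo.mono h)

end unifIoo

section sellerMix

variable {ε : ℝ} {f : ℝ → ℝ}

lemma integrable_sellerMix_iff :
    Integrable f (sellerMix ε) ↔ Integrable f (unifIoo 0 ε) ∧ Integrable f (unifIoo 1 (1 + ε)) := by
  simp only [sellerMix, integrable_add_measure,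
    integrable_smul_measure (by norm_num : (1 / 2 : ℝ≥0∞) ≠ 0) (by norm_num)]

lemma integral_sellerMix (hf : Integrable f (sellerMix ε)) :
    ∫ x, f x ∂sellerMix ε = (∫ x, f x ∂unifIoo 0 ε + ∫ x, f x ∂unifIoo 1 (1 + ε)) / 2 := by
  obtain ⟨h₀, h₁⟩ := integrable_sellerMix_iff.1 hf
  rw [sellerMix, integral_add_measure (h₀.smul_measure (by norm_num))
    (h₁.smul_measure (by norm_num)), integral_smul_measure, integral_smul_measure]
  norm_num
  ring

variable (hε : 0 < ε)
include hε

lemma isProbabilityMeasure_sellerMix : IsProbabilityMeasure (sellerMix ε) := by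
  have := isProbabilityMeasure_unifIoo hε
  have := isProbabilityMeasure_unifIoo (show 1 < 1 + ε by linarith)
  constructor
  simp only [sellerMix, Measure.add_apply, Measure.smul_apply, measure_univ, smul_eq_mul,
    mul_one]
  exact ENNReal.add_halves 1

lemma integrable_id_sellerMix : Integrable id (sellerMix ε) :=
  integrable_sellerMix_iff.2
    ⟨continuous_id.integrable_unifIoo hε, continuous_id.integrable_unifIoo (by linarith)⟩

variable {A B : ℝ}

lemma integral_sellerMix_le (hf : Integrable f (sellerMix ε))
    (hA : ∀ x ∈ Ioo 0 ε, f x ≤ A) (hB : ∀ x ∈ Ioo 1 (1 + ε), f x ≤ B) :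
    ∫ x, f x ∂sellerMix ε ≤ (A + B) / 2 := by
  obtain ⟨h₀, h₁⟩ := integrable_sellerMix_iff.1 hf
  rw [integral_sellerMix hf]
  linarith [integral_unifIoo_le hε h₀ hA, integral_unifIoo_le (by linarith) h₁ hB]

lemma le_integral_sellerMix (hf : Integrable f (sellerMix ε))
    (hA : ∀ x ∈ Ioo 0 ε, A ≤ f x) (hB : ∀ x ∈ Ioo 1 (1 + ε), B ≤ f x) :
    (A + B) / 2 ≤ ∫ x, f x ∂sellerMix ε := by
  obtain ⟨h₀, h₁⟩ := integrable_sellerMix_iff.1 hf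
  rw [integral_sellerMix hf]
  linarith [le_integral_unifIoo hε h₀ hA, le_integral_unifIoo (by linarith) h₁ hB]

end sellerMix

section fixedPriceWelfare

noncomputable def fixedPriceWelfare (p vs vb : ℝ) : ℝ :=
  if vs ≤ p ∧ p ≤ vb then vb else vs

variable {p vs vb : ℝ}

lemma fixedPriceWelfare_of_price_lt (h : p < vs) : fixedPriceWelfare p vs vb = vs :=
  if_neg fun h' => h.not_ge h'.1

lemma fixedPriceWelfare_of_lt_price (h : vb < p) : fixedPriceWelfare p vs vb = vs :=
  if_neg fun h' => h.not_ge h'.2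

lemma fixedPriceWelfare_le_max : fixedPriceWelfare p vs vb ≤ max vs vb := by
  unfold fixedPriceWelfare
  split_ifs
  exacts [le_max_right _ _, le_max_left _ _]

lemma min_le_fixedPriceWelfare : min vs vb ≤ fixedPriceWelfare p vs vb := by
  unfold fixedPriceWelfare
  split_ifs
  exacts [min_le_right _ _, min_le_left _ _]

lemma measurable_fixedPriceWelfare : Measurable fun vs => fixedPriceWelfare p vs vb :=
  Measurable.ite (measurableSet_Iic.inter (MeasurableSet.const _)) measurable_const measurable_id

lemma abs_fixedPriceWelfare_le : |fixedPriceWelfare p vs vb| ≤ |vs| + |vb| := by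
  unfold fixedPriceWelfare
  split_ifs <;> simp

lemma integrable_fixedPriceWelfare {μ : Measure ℝ} [IsFiniteMeasure μ] (h : Integrable id μ) :
    Integrable (fun vs => fixedPriceWelfare p vs vb) μ :=
  (h.abs.add (integrable_const |vb|)).mono' measurable_fixedPriceWelfare.aestronglyMeasurable
    (ae_of_all _ fun _ => abs_fixedPriceWelfare_le)

end fixedPriceWelfare

section welfareRatio

variable {ε γ p : ℝ} (hε : 0 < ε)
include hε

lemma integrable_fixedPriceWelfare_sellerMix (vb : ℝ) :
    Integrable (fun vs => fixedPriceWelfare p vs vb) (sellerMix ε) :=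
  have := isProbabilityMeasure_sellerMix hε
  integrable_fixedPriceWelfare (integrable_id_sellerMix hε)

lemma integral_fixedPriceWelfare_nonneg {vb : ℝ} (hvb : 0 ≤ vb) :
    0 ≤ ∫ x, fixedPriceWelfare p x vb ∂sellerMix ε := by
  have hpos : ∀ x, 0 < x → 0 ≤ fixedPriceWelfare p x vb := fun x hx =>
    (le_min hx.le hvb).trans min_le_fixedPriceWelfare
  simpa using le_integral_sellerMix hε (integrable_fixedPriceWelfare_sellerMix hε vb)
    (fun x hx => hpos x hx.1) (fun x hx => hpos x (by linarith [hx.1]))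

lemma le_integral_max_sellerMix (c : ℝ) : c ≤ ∫ x, max x c ∂sellerMix ε := by
  have := isProbabilityMeasure_sellerMix hε
  simpa using le_integral_sellerMix hε ((integrable_id_sellerMix hε).sup (integrable_const c))
    (fun x _ => le_max_right x c) (fun x _ => le_max_right x c)

lemma exists_buyer_of_price_le_one (hγ₀ : 0 ≤ γ) (hγ₂ : γ < 2) (hp : p ≤ 1) :
    ∃ c, 0 ≤ c ∧ γ * ∫ x, fixedPriceWelfare p x c ∂sellerMix ε ≤ ∫ x, max x c ∂sellerMix ε := by
  set c := 2 * (1 + ε) / (2 - γ)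
  have hc : c * (2 - γ) = 2 * (1 + ε) := div_mul_cancel₀ _ (by linarith)
  have hεc : 1 + ε ≤ c := by nlinarith
  have hW : ∫ x, fixedPriceWelfare p x c ∂sellerMix ε ≤ (c + (1 + ε)) / 2 :=
    integral_sellerMix_le hε (integrable_fixedPriceWelfare_sellerMix hε c)
      (fun x hx => fixedPriceWelfare_le_max.trans (max_le (by linarith [hx.2]) le_rfl))
      (fun x hx => (fixedPriceWelfare_of_price_lt (by linarith [hx.1])).trans_le hx.2.le)
  refine ⟨c, by linarith, ?_⟩
  calc γ * ∫ x, fixedPriceWelfare p x c ∂sellerMix ε ≤ γ * ((c + (1 + ε)) / 2) :=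
        mul_le_mul_of_nonneg_left hW hγ₀
    _ ≤ c := by nlinarith
    _ ≤ ∫ x, max x c ∂sellerMix ε := le_integral_max_sellerMix hε c

lemma exists_buyer_of_one_lt_price (hγ₀ : 0 ≤ γ) (hγε : γ * (1 + 2 * ε) ≤ 2) (hp : 1 < p) :
    ∃ c, 0 ≤ c ∧ γ * ∫ x, fixedPriceWelfare p x c ∂sellerMix ε ≤ ∫ x, max x c ∂sellerMix ε := by
  have hW : ∫ x, fixedPriceWelfare p x 1 ∂sellerMix ε ≤ (ε + (1 + ε)) / 2 :=
    integral_sellerMix_le hε (integrable_fixedPriceWelfare_sellerMix hε 1)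
      (fun x hx => (fixedPriceWelfare_of_lt_price hp).trans_le hx.2.le)
      (fun x hx => (fixedPriceWelfare_of_lt_price hp).trans_le hx.2.le)
  refine ⟨1, zero_le_one, ?_⟩
  calc γ * ∫ x, fixedPriceWelfare p x 1 ∂sellerMix ε ≤ γ * ((ε + (1 + ε)) / 2) :=
        mul_le_mul_of_nonneg_left hW hγ₀
    _ ≤ 1 := by linarith
    _ ≤ ∫ x, max x 1 ∂sellerMix ε := le_integral_max_sellerMix hε 1

end welfareRatio

/-- No fixed-price mechanism whose trade price depends only on the seller's
distribution achieves an approximation ratio better than 2: for every `γ < 2` there is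
a seller distribution (an equal mixture of uniform distributions on `(0, ε)` and
`(1, 1 + ε)` for sufficiently small `ε > 0`) such that for every trade price `p` there
is a deterministic buyer value `c ≥ 0` for which the expected welfare of the
fixed-price mechanism with price `p` is at most a `1/γ` fraction of the optimal
expected welfare. -/
theorem no_better_than_two_from_seller_distribution_only :
    ∀ γ : ℝ, γ < 2 →
      ∃ ε : ℝ, 0 < ε ∧
        ∀ p : ℝ, ∃ c : ℝ, 0 ≤ c ∧
          γ * ∫ x, (if x ≤ p ∧ p ≤ c then c else x) ∂(sellerMix ε)
            ≤ ∫ x, max x c ∂(sellerMix ε) := by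
  intro γ hγ
  set γ₀ := max γ 0
  have hγ₀ : γ₀ < 2 := max_lt hγ two_pos
  have hε : 0 < (2 - γ₀) / 4 := by linarith
  refine ⟨(2 - γ₀) / 4, hε, fun p => ?_⟩
  obtain ⟨c, hc, hratio⟩ : ∃ c, 0 ≤ c ∧ γ₀ * ∫ x, fixedPriceWelfare p x c ∂sellerMix ((2 - γ₀) / 4)
      ≤ ∫ x, max x c ∂sellerMix ((2 - γ₀) / 4) := by
    rcases le_or_gt p 1 with hp | hp
    · exact exists_buyer_of_price_le_one hε (le_max_right γ 0) hγ₀ hp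
    · -- `γ₀ (1 + 2ε) = 2 - (2 - γ₀)² / 2`
      exact exists_buyer_of_one_lt_price hε (le_max_right γ 0)
          (by nlinarith [sq_nonneg (2 - γ₀)]) hp
  exact ⟨c, hc, (mul_le_mul_of_nonneg_right (le_max_left γ 0)
    (integral_fixedPriceWelfare_nonneg hε hc)).trans hratio⟩
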